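/- arXiv:2109.08856 — 3 statements merged into one kernel-verified Lean document; each statement's English description precedes it below -/
import Mathlib

section
/- There exist an assignment problem with n = 3 agents and 3 items, a preference profile, and a random assignment that satisfies sd-Pareto-efficiency (sd-PE) but does not satisfy ex-ante favoring-eagerness-for-remaining-items (ea-FERI). -/
open Finset

noncomputable section

namespace FeriPaper

/-- A preference profile: `R j o o'` means agent `j` strictly prefers item `o` to `o'`. -/
abbrev Pref (n : ℕ) := Fin n → Fin n → Fin n → Prop

/-- Every agent's preference is a strict linear (total) order on the items. -/
def IsProfile {n : ℕ} (R : Pref n) : Prop :=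
  ∀ j : Fin n, IsStrictTotalOrder (Fin n) (R j)

/-- Profiles as a type (for mechanisms). -/
def Profile (n : ℕ) := { R : Pref n // IsProfile R }

/-- `o` is agent `j`'s most preferred item in the set `S`. -/
def IsTopIn {n : ℕ} (R : Pref n) (j : Fin n) (S : Set (Fin n)) (o : Fin n) : Prop :=
  o ∈ S ∧ ∀ o' ∈ S, o' ≠ o → R j o o'

/-- `Tunion R A r` is the union `T_1(A) ∪ ⋯ ∪ T_r(A)` (so `Tunion R A 0 = ∅`). -/
def Tunion {n : ℕ} (R : Pref n) (A : Equiv.Perm (Fin n)) : ℕ → Set (Fin n)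
  | 0 => ∅
  | r + 1 =>
      Tunion R A r ∪
        {o | ∃ j : Fin n, A j ∉ Tunion R A r ∧ IsTopIn R j (Tunion R A r)ᶜ o}

/-- `Tset R A r` is the set `T_{r+1}(A)` (0-based round index). -/
def Tset {n : ℕ} (R : Pref n) (A : Equiv.Perm (Fin n)) (r : ℕ) : Set (Fin n) :=
  {o | ∃ j : Fin n, A j ∉ Tunion R A r ∧ IsTopIn R j (Tunion R A r)ᶜ o}

/-- Favoring-eagerness-for-remaining-items (FERI). -/
def FERI {n : ℕ} (R : Pref n) (A : Equiv.Perm (Fin n)) : Prop :=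
  ∀ r : ℕ, ∀ o ∈ Tset R A r, IsTopIn R (A.symm o) (Tunion R A r)ᶜ o

/-- Pareto efficiency (PE) of a deterministic assignment. -/
def ParetoEff {n : ℕ} (R : Pref n) (A : Equiv.Perm (Fin n)) : Prop :=
  ¬ ∃ (A' : Equiv.Perm (Fin n)) (N' : Set (Fin n)), N'.Nonempty ∧
      (∀ j ∈ N', R j (A' j) (A j)) ∧ ∀ k, k ∉ N' → A' k = A k

/-- Number of agents receiving their overall first choice. -/
def firstChoiceCount {n : ℕ} (R : Pref n) (A : Equiv.Perm (Fin n)) : ℕ :=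
  {j : Fin n | IsTopIn R j Set.univ (A j)}.ncard

/-- First-choice maximality (FCM). -/
def FCM {n : ℕ} (R : Pref n) (A : Equiv.Perm (Fin n)) : Prop :=
  ¬ ∃ A' : Equiv.Perm (Fin n), firstChoiceCount R A < firstChoiceCount R A'

/-- Rank of item `o` in agent `j`'s preference (1 = most preferred). -/
def rank {n : ℕ} (R : Pref n) (j o : Fin n) : ℕ :=
  {o' : Fin n | R j o' o ∨ o' = o}.ncard

/-- Favoring-higher-ranks (FHR). -/
def FHR {n : ℕ} (R : Pref n) (A : Equiv.Perm (Fin n)) : Prop :=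
  ∀ j k : Fin n, rank R j (A j) ≤ rank R k (A j) ∨ rank R k (A k) < rank R k (A j)

/-- Popularity (POP). -/
def POP {n : ℕ} (R : Pref n) (A : Equiv.Perm (Fin n)) : Prop :=
  ¬ ∃ A' : Equiv.Perm (Fin n),
      {j : Fin n | R j (A j) (A' j)}.ncard < {j : Fin n | R j (A' j) (A j)}.ncard

/-- Signature of a deterministic assignment: `signature R A r` is the number of agents
    assigned their `r`-th ranked item. -/
def signature {n : ℕ} (R : Pref n) (A : Equiv.Perm (Fin n)) (r : ℕ) : ℕ :=
  {j : Fin n | rank R j (A j) = r}.ncard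

/-- `x` dominates `y` as signatures. -/
def SigDom (x y : ℕ → ℕ) : Prop :=
  ∃ r : ℕ, y r < x r ∧ ∀ r' < r, y r' ≤ x r'

/-- Rank maximality (RM). -/
def RM {n : ℕ} (R : Pref n) (A : Equiv.Perm (Fin n)) : Prop :=
  ¬ ∃ A' : Equiv.Perm (Fin n), SigDom (signature R A') (signature R A)

/-- A random assignment: a doubly stochastic matrix. -/
def DoublyStochastic {n : ℕ} (P : Fin n → Fin n → ℝ) : Prop :=
  (∀ j o, 0 ≤ P j o) ∧ (∀ j, ∑ o, P j o = 1) ∧ (∀ o, ∑ j, P j o = 1)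

/-- The 0-1 permutation matrix of a deterministic assignment. -/
def permMatrix {n : ℕ} (A : Equiv.Perm (Fin n)) : Fin n → Fin n → ℝ :=
  fun j o => if A j = o then 1 else 0

/-- Upper contour set of item `o` under the strict preference `pr`. -/
def ucs {n : ℕ} (pr : Fin n → Fin n → Prop) (o : Fin n) : Set (Fin n) :=
  {x | pr x o ∨ x = o}

/-- Total probability mass on the upper contour set of `o`. -/
def upperSum {n : ℕ} (pr : Fin n → Fin n → Prop) (p : Fin n → ℝ) (o : Fin n) : ℝ :=
  ∑ x, (ucs pr o).indicator p x

/-- `p` (weakly) stochastically dominates `q` w.r.t. the strict preference `pr`. -/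
def SD {n : ℕ} (pr : Fin n → Fin n → Prop) (p q : Fin n → ℝ) : Prop :=
  ∀ o, upperSum pr q o ≤ upperSum pr p o

/-- sd-envy-freeness. -/
def sdEF {n : ℕ} (R : Pref n) (P : Fin n → Fin n → ℝ) : Prop :=
  ∀ j k : Fin n, SD (R j) (P j) (P k)

/-- sd-weak-envy-freeness. -/
def sdWEF {n : ℕ} (R : Pref n) (P : Fin n → Fin n → ℝ) : Prop :=
  ∀ j k : Fin n, SD (R j) (P k) (P j) → P j = P k

/-- The common prefix of the preferences of agents `j` and `k`: items all of whose
    (weak) upper contour sets w.r.t. `j` coincide for `j` and `k`. -/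
def commonPrefix {n : ℕ} (R : Pref n) (j k : Fin n) : Set (Fin n) :=
  {o | ∀ x ∈ ucs (R j) o, ucs (R j) x = ucs (R k) x}

/-- Strong equal treatment of equals (SETE). -/
def SETE {n : ℕ} (R : Pref n) (P : Fin n → Fin n → ℝ) : Prop :=
  ∀ j k : Fin n, ∀ o ∈ commonPrefix R j k, P j o = P k o

/-- A random assignment satisfies a property `X` ex post if it is a convex combination
    of (permutation matrices of) deterministic assignments each satisfying `X`. -/
def ExPost {n : ℕ} (X : Equiv.Perm (Fin n) → Prop) (P : Fin n → Fin n → ℝ) : Prop :=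
  ∃ w : Equiv.Perm (Fin n) → ℝ, (∀ A, 0 ≤ w A) ∧ (∑ A, w A) = 1 ∧
    (∀ A, w A ≠ 0 → X A) ∧ ∀ j o, P j o = ∑ A, w A * permMatrix A j o

/-- Ex-ante favoring-higher-ranks (ea-FHR). -/
def EaFHR {n : ℕ} (R : Pref n) (P : Fin n → Fin n → ℝ) : Prop :=
  ∀ j o, 0 < P j o → ∀ k, rank R k o < rank R j o → upperSum (R k) (P k) o = 1

/-- The eating structure for ea-FERI: `(eaState R P r).1 = M_{P,r+1}` and
    `(eaState R P r).2 o = ⋃_{r' ≤ r+1} E_{P,r'}(o)` (1-based indexing on the right). -/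
def eaState {n : ℕ} (R : Pref n) (P : Fin n → Fin n → ℝ) :
    ℕ → Set (Fin n) × (Fin n → Set (Fin n))
  | 0 => (Set.univ, fun o => {j | IsTopIn R j Set.univ o})
  | r + 1 =>
      let prev := eaState R P r
      let M : Set (Fin n) := {o | ∑ k, (prev.2 o).indicator (fun k' => P k' o) k < 1}
      (M, fun o => prev.2 o ∪ {j | IsTopIn R j M o})

/-- `eaM R P r = M_{P,r+1}` (0-based round index). -/
def eaM {n : ℕ} (R : Pref n) (P : Fin n → Fin n → ℝ) (r : ℕ) : Set (Fin n) :=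
  (eaState R P r).1

/-- `eaE R P r o = E_{P,r+1}(o)` (0-based round index). -/
def eaE {n : ℕ} (R : Pref n) (P : Fin n → Fin n → ℝ) (r : ℕ) (o : Fin n) : Set (Fin n) :=
  {j | IsTopIn R j (eaM R P r) o}

/-- Ex-ante FERI (ea-FERI). -/
def EaFERI {n : ℕ} (R : Pref n) (P : Fin n → Fin n → ℝ) : Prop :=
  ∀ r : ℕ, ∀ o ∈ eaM R P r, ∀ j : Fin n, (∃ r' < r, j ∈ eaE R P r' o) →
    upperSum (R j) (P j) o = 1

/-- sd-Pareto-efficiency (sd-PE). -/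
def SdPE {n : ℕ} (R : Pref n) (P : Fin n → Fin n → ℝ) : Prop :=
  ¬ ∃ Q : Fin n → Fin n → ℝ, DoublyStochastic Q ∧ Q ≠ P ∧ ∀ j, SD (R j) (Q j) (P j)

/-- `A` is the output of the adaptive Boston mechanism with priority order `prio`
    (`prio j k` means `j` has higher priority than `k`): in every round, every item that
    receives applicants is assigned to its highest-priority applicant. -/
def ABMOutcome {n : ℕ} (prio : Fin n → Fin n → Prop) (R : Pref n)
    (A : Equiv.Perm (Fin n)) : Prop :=
  ∀ r : ℕ, ∀ o ∈ Tset R A r,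
    IsTopIn R (A.symm o) (Tunion R A r)ᶜ o ∧
      ∀ j : Fin n, A j ∉ Tunion R A r → IsTopIn R j (Tunion R A r)ᶜ o →
        j ≠ A.symm o → prio (A.symm o) j

end FeriPaper

namespace FeriPaper

-- my stuff
def rkW : Fin 3 → Fin 3 → Fin 3 := ![![0,1,2], ![1,0,2], ![1,0,2]]

def RW : Pref 3 := fun j o o' => rkW j o < rkW j o'

def PW : Fin 3 → Fin 3 → ℝ := ![![0,0,1], ![0,1,0], ![1,0,0]]


instance RWdec : ∀ j o o', Decidable (RW j o o') :=
  fun j o o' => inferInstanceAs (Decidable (rkW j o < rkW j o'))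

lemma RW_profile : IsProfile RW := by
  intro j
  exact { trichotomous := by intro a b; fin_cases j <;> fin_cases a <;> fin_cases b <;>
            decide,
          irrefl := by intro a; show ¬ rkW j a < rkW j a; exact lt_irrefl _,
          trans := by intro a b c h1 h2; exact lt_trans h1 h2 }

lemma top00 : IsTopIn RW 0 Set.univ 0 := by
  refine ⟨Set.mem_univ _, ?_⟩
  intro o' _ h; fin_cases o' <;> simp_all <;> decide

lemma PW_ds : DoublyStochastic PW := by
  refine ⟨?_, ?_, ?_⟩
  · intro j o; fin_cases j <;> fin_cases o <;> norm_num [PW]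
  · intro j; fin_cases j <;> norm_num [PW, Fin.sum_univ_three, Matrix.vecHead, Matrix.vecTail, Matrix.cons_val_two]
  · intro o; fin_cases o <;> simp [PW, Fin.sum_univ_three, Matrix.vecHead, Matrix.vecTail]

lemma PW_not_eaFERI : ¬ EaFERI RW PW := by
  intro h
  have hmem : (0 : Fin 3) ∈ eaM RW PW 1 := by
    show (∑ k, ((eaState RW PW 0).2 0).indicator (fun k' => PW k' 0) k) < 1
    have hE : (eaState RW PW 0).2 0 = {(0 : Fin 3)} := by
      ext j
      simp only [eaState, Set.mem_setOf_eq, Set.mem_singleton_iff]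
      constructor
      · rintro ⟨-, h2⟩
        fin_cases j
        · rfl
        · exact absurd (h2 1 (Set.mem_univ _) (by decide)) (by decide)
        · exact absurd (h2 1 (Set.mem_univ _) (by decide)) (by decide)
      · rintro rfl
        exact top00
    rw [hE, Fin.sum_univ_three]
    rw [Set.indicator_of_mem (Set.mem_singleton_iff.mpr rfl), Set.indicator_of_notMem (by decide),
        Set.indicator_of_notMem (by decide)]
    norm_num [PW]
  have hE0 : (0 : Fin 3) ∈ eaE RW PW 0 0 := top00
  have := h 1 0 hmem 0 ⟨0, by norm_num, hE0⟩
  rw [upperSum, Fin.sum_univ_three] at this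
  have h0 : (0:Fin 3) ∈ ucs (RW 0) 0 := Or.inr rfl
  have h1 : (1:Fin 3) ∉ ucs (RW 0) 0 := by rintro (h|h) <;> revert h <;> decide
  have h2 : (2:Fin 3) ∉ ucs (RW 0) 0 := by rintro (h|h) <;> revert h <;> decide
  rw [Set.indicator_of_mem h0 (PW 0), Set.indicator_of_notMem h1, Set.indicator_of_notMem h2] at this
  norm_num [PW] at this

lemma ucs11 : ∀ p : Fin 3 → ℝ, upperSum (RW 1) p 1 = p 1 := by
  intro p
  have h0 : (0:Fin 3) ∉ ucs (RW 1) 1 := by rintro (h|h) <;> revert h <;> decide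
  have h1 : (1:Fin 3) ∈ ucs (RW 1) 1 := Or.inr rfl
  have h2 : (2:Fin 3) ∉ ucs (RW 1) 1 := by rintro (h|h) <;> revert h <;> decide
  rw [upperSum, Fin.sum_univ_three, Set.indicator_of_notMem h0,
      Set.indicator_of_mem h1, Set.indicator_of_notMem h2]
  ring

lemma ucs20 : ∀ p : Fin 3 → ℝ, upperSum (RW 2) p 0 = p 0 + p 1 := by
  intro p
  have h0 : (0:Fin 3) ∈ ucs (RW 2) 0 := Or.inr rfl
  have h1 : (1:Fin 3) ∈ ucs (RW 2) 0 := Or.inl (by decide)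
  have h2 : (2:Fin 3) ∉ ucs (RW 2) 0 := by rintro (h|h) <;> revert h <;> decide
  rw [upperSum, Fin.sum_univ_three, Set.indicator_of_mem h0,
      Set.indicator_of_mem h1, Set.indicator_of_notMem h2]
  ring

lemma PW_sdPE : SdPE RW PW := by
  rintro ⟨Q, ⟨hpos, hrow, hcol⟩, hne, hSD⟩
  have h11 : (1:ℝ) ≤ Q 1 1 := by
    have := hSD 1 1
    rw [ucs11 (PW 1), ucs11 (Q 1)] at this
    simpa [PW] using this
  have h20 : (1:ℝ) ≤ Q 2 0 + Q 2 1 := by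
    have := hSD 2 0
    rw [ucs20 (PW 2), ucs20 (Q 2)] at this
    have hp : PW 2 0 + PW 2 1 = 1 := by norm_num [PW, Matrix.cons_val_two]
    linarith
  have r0 := hrow 0; rw [Fin.sum_univ_three] at r0
  have r1 := hrow 1; rw [Fin.sum_univ_three] at r1
  have r2 := hrow 2; rw [Fin.sum_univ_three] at r2
  have c0 := hcol 0; rw [Fin.sum_univ_three] at c0
  have c1 := hcol 1; rw [Fin.sum_univ_three] at c1
  have e10 : Q 1 0 = 0 := by linarith [hpos 1 0, hpos 1 2]
  have e12 : Q 1 2 = 0 := by linarith [hpos 1 0, hpos 1 2]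
  have e11 : Q 1 1 = 1 := by linarith
  have e01 : Q 0 1 = 0 := by linarith [hpos 0 1, hpos 2 1]
  have e21 : Q 2 1 = 0 := by linarith [hpos 0 1, hpos 2 1]
  have e20 : Q 2 0 = 1 := by linarith [hpos 2 2]
  have e22 : Q 2 2 = 0 := by linarith
  have e00 : Q 0 0 = 0 := by linarith [hpos 0 0]
  have e02 : Q 0 2 = 1 := by linarith
  apply hne
  funext j o
  fin_cases j <;> fin_cases o <;> simp [PW] <;> assumption

/-- sd-PE does not imply ea-FERI (witnessed with 3 agents and 3 items). -/
theorem sdPE_not_imp_eaFERI :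
    ∃ R : Pref 3, IsProfile R ∧
      ∃ P : Fin 3 → Fin 3 → ℝ, DoublyStochastic P ∧ SdPE R P ∧ ¬ EaFERI R P := by
  exact ⟨RW, RW_profile, PW, PW_ds, PW_sdPE, PW_not_eaFERI⟩

end FeriPaper
end
end

section
/- For every assignment problem and preference profile, every random assignment satisfying ex-ante favoring-eagerness-for-remaining-items (ea-FERI) also satisfies ex-post first-choice maximality, i.e., it is a convex combination of deterministic assignments each satisfying first-choice maximality (FCM). -/
open Finset

noncomputable section

namespace FeriPaper

/-- Every nonempty finset has a maximal element w.r.t. a strict total order. -/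
lemma exists_top_finset {n : ℕ} (R : Pref n) (hR : IsProfile R) (j : Fin n) :
    ∀ s : Finset (Fin n), s.Nonempty → ∃ o ∈ s, ∀ o' ∈ s, o' ≠ o → R j o o' := by
  intro s
  induction s using Finset.induction_on with
  | empty => rintro ⟨x, hx⟩; simp at hx
  | @insert a s hns ih =>
    intro _
    rcases s.eq_empty_or_nonempty with rfl | hs
    · exact ⟨a, by simp, by intro o' ho' hne; simp at ho'; exact absurd ho' hne⟩
    · obtain ⟨o, ho, hmax⟩ := ih hs
      rcases (show R j a o ∨ a = o ∨ R j o a by classical exact if h1 : R j a o then Or.inl h1 else if h2 : R j o a then Or.inr (Or.inr h2) else Or.inr (Or.inl ((hR j).trichotomous a o h1 h2))) with hao | rfl | hoa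
      · refine ⟨a, Finset.mem_insert_self a s, ?_⟩
        intro o' ho' hne
        rcases Finset.mem_insert.1 ho' with rfl | ho's
        · exact absurd rfl hne
        · by_cases h' : o' = o
          · subst h'; exact hao
          · exact (hR j).trans a o o' hao (hmax o' ho's h')
      · exact ⟨a, Finset.mem_insert_of_mem ho, by
          intro o' ho' hne
          rcases Finset.mem_insert.1 ho' with rfl | ho's
          · exact absurd rfl hne
          · exact hmax o' ho's hne⟩
      · refine ⟨o, Finset.mem_insert_of_mem ho, ?_⟩
        intro o' ho' hne
        rcases Finset.mem_insert.1 ho' with rfl | ho's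
        · exact hoa
        · exact hmax o' ho's hne

lemma exists_top {n : ℕ} (R : Pref n) (hR : IsProfile R) (j : Fin n) :
    ∃ o, IsTopIn R j Set.univ o := by
  obtain ⟨o, _, hmax⟩ := exists_top_finset R hR j Finset.univ ⟨j, Finset.mem_univ j⟩
  exact ⟨o, Set.mem_univ o, fun o' _ hne => hmax o' (Finset.mem_univ o') hne⟩

lemma ucs_top {n : ℕ} (R : Pref n) (hR : IsProfile R) {j o : Fin n}
    (h : IsTopIn R j Set.univ o) : ucs (R j) o = {o} := by
  ext x
  simp only [ucs, Set.mem_setOf_eq, Set.mem_singleton_iff]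
  constructor
  · rintro (hxo | rfl)
    · by_contra hne
      have hox := h.2 x (Set.mem_univ x) hne
      exact (hR j).irrefl x ((hR j).trans x o x hxo hox)
    · rfl
  · rintro rfl; exact Or.inr rfl

lemma upperSum_top {n : ℕ} (R : Pref n) (hR : IsProfile R) {j o : Fin n}
    (h : IsTopIn R j Set.univ o) (p : Fin n → ℝ) : upperSum (R j) p o = p o := by
  classical
  rw [upperSum, ucs_top R hR h]
  have : ∀ x : Fin n, ({o} : Set (Fin n)).indicator p x = if x = o then p x else 0 := by
    intro x
    by_cases hx : x = o
    · subst hx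
      rw [Set.indicator_of_mem (Set.mem_singleton x) p, if_pos rfl]
    · rw [Set.indicator_of_notMem (by simpa using hx) p, if_neg hx]
  rw [Finset.sum_congr rfl fun x _ => this x, Finset.sum_ite_eq' Finset.univ o p]
  simp

/-- Key consequence of ea-FERI: every item that is someone's first choice is fully
allocated among the agents for whom it is the first choice. -/
lemma eaFERI_first_choice_zero {n : ℕ} (R : Pref n) (hR : IsProfile R)
    (P : Fin n → Fin n → ℝ) (hP : DoublyStochastic P) (h : EaFERI R P)
    (o : Fin n) (hfan : ∃ j, IsTopIn R j Set.univ o)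
    (k : Fin n) (hk : ¬ IsTopIn R k Set.univ o) : P k o = 0 := by
  classical
  set fans : Set (Fin n) := {j | IsTopIn R j Set.univ o} with hfans
  obtain ⟨j0, hj0⟩ := hfan
  have hge : 1 ≤ ∑ m, fans.indicator (fun k' => P k' o) m := by
    by_contra hlt
    push_neg at hlt
    have hoM : o ∈ eaM R P 1 := by
      show o ∈ (eaState R P 1).1
      simp only [eaState]
      exact hlt
    have hj0E : j0 ∈ eaE R P 0 o := by
      show IsTopIn R j0 (eaM R P 0) o
      have : eaM R P 0 = Set.univ := rfl
      rw [this]; exact hj0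
    have h1 := h 1 o hoM j0 ⟨0, Nat.zero_lt_one, hj0E⟩
    have hP1 : P j0 o = 1 := by
      have := upperSum_top R hR hj0 (P j0)
      rw [this] at h1; exact h1
    have hone : (1 : ℝ) ≤ ∑ m, fans.indicator (fun k' => P k' o) m := by
      have hterm : fans.indicator (fun k' => P k' o) j0 = 1 := by
        rw [Set.indicator_of_mem (show j0 ∈ fans from hj0), hP1]
      calc (1 : ℝ) = fans.indicator (fun k' => P k' o) j0 := hterm.symm
        _ ≤ ∑ m, fans.indicator (fun k' => P k' o) m := by
            apply Finset.single_le_sum (f := fun m => fans.indicator (fun k' => P k' o) m)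
            · intro i _
              exact Set.indicator_nonneg (fun x _ => hP.1 x o) i
            · exact Finset.mem_univ j0
    linarith
  have hle : ∀ m : Fin n, fans.indicator (fun k' => P k' o) m ≤ P m o := by
    intro m
    by_cases hm : m ∈ fans
    · rw [Set.indicator_of_mem (show m ∈ fans from hm)]
    · rw [Set.indicator_of_notMem (show m ∉ fans from hm)]; exact hP.1 m o
  have hcol : ∑ m, P m o = 1 := hP.2.2 o
  have hsum0 : ∑ m, (P m o - fans.indicator (fun k' => P k' o) m) = 0 := by
    rw [Finset.sum_sub_distrib, hcol]
    have h1 : ∑ m, fans.indicator (fun k' => P k' o) m ≤ 1 := by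
      rw [← hcol]; exact Finset.sum_le_sum fun m _ => hle m
    linarith
  have hzero := (Finset.sum_eq_zero_iff_of_nonneg
    (fun m _ => sub_nonneg.2 (hle m))).1 hsum0 k (Finset.mem_univ k)
  have hkind : fans.indicator (fun k' => P k' o) k = 0 := Set.indicator_of_notMem (show k ∉ fans from hk) _
  rw [hkind] at hzero
  linarith

lemma permMatrix_eq {n : ℕ} (σ : Equiv.Perm (Fin n)) (j o : Fin n) :
    (σ.permMatrix ℝ) j o = permMatrix σ j o := by
  simp only [Equiv.Perm.permMatrix, PEquiv.toMatrix_apply, Equiv.toPEquiv_apply,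
    Option.mem_def, Option.some.injEq, permMatrix]

/-- Every ea-FERI random assignment is ex-post first-choice maximal. -/
theorem eaFERI_implies_exPost_FCM {n : ℕ} (R : Pref n) (hR : IsProfile R)
    (P : Fin n → Fin n → ℝ) (hP : DoublyStochastic P) (h : EaFERI R P) :
    ExPost (FCM R) P := by
  classical
  -- Birkhoff decomposition
  have hmem : (Matrix.of P) ∈ doublyStochastic ℝ (Fin n) :=
    (mem_doublyStochastic_iff_sum).2 ⟨hP.1, hP.2.1, hP.2.2⟩
  obtain ⟨w, hw0, hw1, hwP⟩ := exists_eq_sum_perm_of_mem_doublyStochastic hmem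
  have hentry : ∀ j o, P j o = ∑ σ, w σ * permMatrix σ j o := by
    intro j o
    have := congrFun (congrFun hwP j) o
    rw [Matrix.sum_apply] at this
    calc P j o = ∑ σ : Equiv.Perm (Fin n), (w σ • σ.permMatrix ℝ) j o := this.symm
      _ = ∑ σ, w σ * permMatrix σ j o := by
          apply Finset.sum_congr rfl
          intro σ _
          rw [Matrix.smul_apply, permMatrix_eq]
          simp [smul_eq_mul]
  -- The set of items that are someone's first choice
  set F : Set (Fin n) := {o | ∃ j, IsTopIn R j Set.univ o} with hF
  -- Upper bound on first-choice count for any assignment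
  have hcount_le : ∀ A : Equiv.Perm (Fin n), firstChoiceCount R A ≤ F.ncard := by
    intro A
    have himg : (A : Fin n → Fin n) '' {j | IsTopIn R j Set.univ (A j)} ⊆ F := by
      rintro o ⟨j, hj, rfl⟩; exact ⟨j, hj⟩
    have := Set.ncard_le_ncard himg F.toFinite
    rwa [Set.ncard_image_of_injective _ A.injective] at this
  refine ⟨w, hw0, hw1, ?_, hentry⟩
  intro A hA
  -- A assigns every first-choice item to one of its fans
  have hwApos : 0 < w A := lt_of_le_of_ne (hw0 A) (Ne.symm hA)
  have hfanA : ∀ o ∈ F, IsTopIn R (A.symm o) Set.univ o := by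
    intro o hoF
    by_contra hnot
    have hz : P (A.symm o) o = 0 :=
      eaFERI_first_choice_zero R hR P hP h o hoF (A.symm o) hnot
    have hpos : 0 < P (A.symm o) o := by
      rw [hentry]
      have hterm : w A * permMatrix A (A.symm o) o = w A := by
        rw [permMatrix, if_pos (A.apply_symm_apply o), mul_one]
      calc (0 : ℝ) < w A := hwApos
        _ = w A * permMatrix A (A.symm o) o := hterm.symm
        _ ≤ ∑ σ, w σ * permMatrix σ (A.symm o) o := by
            apply Finset.single_le_sum
              (f := fun σ : Equiv.Perm (Fin n) => w σ * permMatrix σ (A.symm o) o)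
            · intro σ _
              apply mul_nonneg (hw0 σ)
              rw [permMatrix]
              split <;> norm_num
            · exact Finset.mem_univ A
    linarith
  -- Lower bound on the first-choice count of A
  have hcount_ge : F.ncard ≤ firstChoiceCount R A := by
    have hsub : (A.symm : Fin n → Fin n) '' F ⊆ {j | IsTopIn R j Set.univ (A j)} := by
      rintro j ⟨o, hoF, rfl⟩
      show IsTopIn R (A.symm o) Set.univ (A (A.symm o))
      rw [A.apply_symm_apply]
      exact hfanA o hoF
    have h1 := Set.ncard_le_ncard hsub (Set.toFinite _)
    rwa [Set.ncard_image_of_injective _ A.symm.injective] at h1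
  -- A is FCM
  rintro ⟨A', hlt⟩
  have := hcount_le A'
  omega

end FeriPaper
end
end

section
/- There exist an assignment problem with n = 6 agents and 6 items, a preference profile, and a deterministic assignment that satisfies favoring-eagerness-for-remaining-items (FERI) but is not popular (POP). -/
open Finset

noncomputable section

namespace FeriPaper

/-- Rank table: `rkTab j o` is the rank (0 = best) of item `o` for agent `j`. -/
def rkTab : Fin 6 → Fin 6 → Fin 6 :=
  ![![0,1,2,3,4,5], ![0,2,1,3,4,5], ![0,3,1,4,2,5],
    ![1,0,2,3,4,5], ![2,0,3,1,4,5], ![4,0,5,1,2,3]]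

/-- The concrete preference profile. -/
def R6 : Pref 6 := fun j o o' => rkTab j o < rkTab j o'

instance instDecR6 : ∀ j, DecidableRel (R6 j) := fun _ _ _ =>
  decidable_of_iff (rkTab _ _ < rkTab _ _) Iff.rfl

/-- The concrete FERI assignment. -/
def A6 : Equiv.Perm (Fin 6) :=
  ⟨![0,2,4,1,3,5], ![0,3,1,4,2,5], by decide, by decide⟩

def decTU : ∀ (r : ℕ), DecidablePred (· ∈ Tunion R6 A6 r)
  | 0 => fun _ => Decidable.isFalse (fun h => h)
  | r + 1 => fun o =>
      letI : DecidablePred (· ∈ Tunion R6 A6 r) := decTU r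
      decidable_of_iff (o ∈ Tunion R6 A6 r ∨
        ∃ j, A6 j ∉ Tunion R6 A6 r ∧
          (o ∉ Tunion R6 A6 r ∧ ∀ o', o' ∉ Tunion R6 A6 r → o' ≠ o → R6 j o o'))
        Iff.rfl

instance instDecTU (r : ℕ) : DecidablePred (· ∈ Tunion R6 A6 r) := decTU r

instance instDecTset (r : ℕ) : DecidablePred (· ∈ Tset R6 A6 r) := fun o =>
  decidable_of_iff (∃ j, A6 j ∉ Tunion R6 A6 r ∧
      (o ∉ Tunion R6 A6 r ∧ ∀ o', o' ∉ Tunion R6 A6 r → o' ≠ o → R6 j o o'))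
    Iff.rfl

lemma tunion_succ (r : ℕ) : Tunion R6 A6 (r + 1) =
    Tunion R6 A6 r ∪ {o | ∃ j : Fin 6, A6 j ∉ Tunion R6 A6 r ∧
      IsTopIn R6 j (Tunion R6 A6 r)ᶜ o} := rfl

lemma tunion_univ : ∀ r, 4 ≤ r → ∀ o : Fin 6, o ∈ Tunion R6 A6 r := by
  intro r hr
  induction r with
  | zero => omega
  | succ n ih =>
    rcases Nat.lt_or_ge n 4 with h | h
    · interval_cases n
      · omega
      · omega
      · omega
      · decide
    · intro o
      rw [tunion_succ]
      exact Or.inl (ih (by omega) o)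

lemma feri_small : ∀ r < 4, ∀ o ∈ Tset R6 A6 r,
    (o ∈ (Tunion R6 A6 r)ᶜ ∧ ∀ o' ∈ (Tunion R6 A6 r)ᶜ, o' ≠ o → R6 (A6.symm o) o o') := by
  intro r hr
  interval_cases r <;> decide

/-- FERI does not imply popularity (witnessed with 6 agents and 6 items). -/
theorem feri_not_imp_pop :
    ∃ R : Pref 6, IsProfile R ∧
      ∃ A : Equiv.Perm (Fin 6), FERI R A ∧ ¬ POP R A := by
  refine ⟨R6, ?_, A6, ?_, ?_⟩
  · intro j
    exact { trichotomous := by revert j; decide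
            irrefl := by revert j; decide
            trans := by revert j; decide }
  · intro r o ho
    rcases Nat.lt_or_ge r 4 with h | h
    · exact feri_small r h o ho
    · exfalso
      obtain ⟨j, _, hmem, _⟩ := ho
      exact hmem (tunion_univ r h o)
  · intro hpop
    apply hpop
    refine ⟨⟨![4,0,2,1,3,5], ![1,3,2,4,0,5], by decide, by decide⟩, ?_⟩
    have h1 : {j : Fin 6 | R6 j (A6 j) ((⟨![4,0,2,1,3,5], ![1,3,2,4,0,5], by decide, by decide⟩ : Equiv.Perm (Fin 6)) j)} = {0} := by
      ext j; revert j; decide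
    have h2 : {j : Fin 6 | R6 j ((⟨![4,0,2,1,3,5], ![1,3,2,4,0,5], by decide, by decide⟩ : Equiv.Perm (Fin 6)) j) (A6 j)} = {1, 2} := by
      ext j; revert j; decide
    rw [h1, h2, Set.ncard_singleton, Set.ncard_pair (by decide)]
    omega

end FeriPaper
end
end
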